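/- arXiv:1107.4291 — 5 statements merged into one kernel-verified Lean document; each statement's English description precedes it below -/
import Mathlib

section
/- Given a crossed module v : N → Q and a group homomorphism φ : P → Q, the pullback φ*(N) = {(n, p) ∈ N × P | v(n) = φ(p)} with the P-action ᵖ'(n, p) = (^{φ(p')}n, p'pp'⁻¹) and the map v̄(n, p) = p is a crossed module over P. -/
/-- The pullback `φ*(N) = {(n,p) | v(n) = φ(p)}` of a crossed module `v : N → Q` along
`φ : P → Q`, with `P`-action `ᵖ'(n,p) = (^{φ(p')}n, p'pp'⁻¹)` and boundary `v̄(n,p) = p`,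
is a crossed module over `P`: the fiber product is a subgroup of `N × P`, the action
preserves it and is compatible with `v̄` (CM1), and the Peiffer identity (CM2) holds. -/
theorem stmt_3 {N P Q : Type*} [Group N] [Group P] [Group Q]
    (v : N →* Q) (a : Q →* MulAut N)
    (cm1 : ∀ (q : Q) (n : N), v (a q n) = q * v n * q⁻¹)
    (cm2 : ∀ n n' : N, a (v n) n' = n * n' * n⁻¹)
    (φ : P →* Q) :
    (∃ S : Subgroup (N × P), ∀ x : N × P, x ∈ S ↔ v x.1 = φ x.2) ∧
    (∀ (p : P) (x : N × P), v x.1 = φ x.2 → v (a (φ p) x.1) = φ (p * x.2 * p⁻¹)) ∧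
    (∀ x y : N × P, v x.1 = φ x.2 → v y.1 = φ y.2 →
      (a (φ x.2) y.1, x.2 * y.2 * x.2⁻¹) = (x.1 * y.1 * x.1⁻¹, x.2 * y.2 * x.2⁻¹)) := by
  refine ⟨⟨(v.comp (MonoidHom.fst N P)).eqLocus (φ.comp (MonoidHom.snd N P)), fun _ => Iff.rfl⟩,
    fun p x hx => ?_, fun x y hx _ => ?_⟩
  · rw [cm1, hx, map_mul, map_mul, map_inv]
  · rw [← hx, cm2]
end

section
/- Let μ : M → P be a crossed module and φ : P → Q a surjective group homomorphism with kernel K. Then the induced crossed module φ*(M) is isomorphic as a crossed Q-module to M/[K,M], where [K,M] is the subgroup of M generated by all ᵏm·m⁻¹ for k ∈ K, m ∈ M. Specifically: [K,M] is a normal subgroup of M stable under the P-action, K acts trivially on M/[K,M], so M/[K,M] carries a Q ≅ P/K-action, and the induced map M/[K,M] → Q is a crossed module satisfying the universal property of the induced crossed module. -/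
/-!
The generators `ᵏm·m⁻¹` of `[K,M]` are permuted by the `P`-action because `K` is normal, and by
the Peiffer identity conjugation in `M` is the action of `μ M`, so `[K,M]` is normal in `M` and
equals its normal closure. A homomorphism out of `M` kills `[K,M]` as soon as it is invariant
under `K`; both `φ ∘ μ` (by CM1) and `h` (by equivariance) are, since `φ` kills `K`. Hence both
descend to `M/[K,M]`, and the factorisation of `h` is unique because `M → M/[K,M]` is onto.
-/

open Subgroup

namespace MulAut

variable {M P : Type*} [Group M] [Group P] (aP : P →* MulAut M) (K : Subgroup P)

/-- The generators `ᵏm·m⁻¹` (`k ∈ K`) of the subgroup `[K,M]`. -/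
def actionCommutatorSet : Set M := {x | ∃ k ∈ K, ∃ m : M, x = aP k m * m⁻¹}

variable {aP K}

theorem apply_mem_actionCommutatorSet [K.Normal] (p : P) {x : M}
    (hx : x ∈ actionCommutatorSet aP K) : aP p x ∈ actionCommutatorSet aP K := by
  obtain ⟨k, hk, m, rfl⟩ := hx
  refine ⟨p * k * p⁻¹, ‹K.Normal›.conj_mem k hk p, aP p m, ?_⟩
  rw [map_mul, map_inv, map_mul, map_mul, map_inv]
  simp only [MulAut.mul_apply, MulAut.inv_apply, MulEquiv.symm_apply_apply]

theorem apply_mem_closure_actionCommutatorSet [K.Normal] (p : P) {x : M}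
    (hx : x ∈ closure (actionCommutatorSet aP K)) :
    aP p x ∈ closure (actionCommutatorSet aP K) :=
  (closure_le ((closure (actionCommutatorSet aP K)).comap (aP p).toMonoidHom)).2
    (fun _ hy => subset_closure (apply_mem_actionCommutatorSet p hy)) hx

theorem closure_actionCommutatorSet_normal [K.Normal] {μ : M →* P}
    (cm2 : ∀ m m' : M, aP (μ m) m' = m * m' * m⁻¹) :
    (closure (actionCommutatorSet aP K)).Normal where
  conj_mem x hx g := cm2 g x ▸ apply_mem_closure_actionCommutatorSet (μ g) hx

theorem normalClosure_actionCommutatorSet_eq_closure [K.Normal] {μ : M →* P}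
    (cm2 : ∀ m m' : M, aP (μ m) m' = m * m' * m⁻¹) :
    normalClosure (actionCommutatorSet aP K) = closure (actionCommutatorSet aP K) := by
  have := closure_actionCommutatorSet_normal (K := K) cm2
  rw [← normalClosure_closure_eq_normalClosure, normalClosure_eq_self]

theorem mk_apply_eq_mk {k : P} (hk : k ∈ K) (m : M) :
    (QuotientGroup.mk (aP k m) : M ⧸ normalClosure (actionCommutatorSet aP K)) =
      QuotientGroup.mk m := by
  rw [QuotientGroup.eq_iff_div_mem, div_eq_mul_inv]
  exact subset_normalClosure ⟨k, hk, m, rfl⟩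

theorem normalClosure_actionCommutatorSet_le_ker {G : Type*} [Group G] (f : M →* G)
    (hf : ∀ k ∈ K, ∀ m : M, f (aP k m) = f m) :
    normalClosure (actionCommutatorSet aP K) ≤ f.ker := by
  refine normalClosure_le_normal ?_
  rintro _ ⟨k, hk, m, rfl⟩
  rw [SetLike.mem_coe, MonoidHom.mem_ker, map_mul, map_inv, hf k hk, mul_inv_cancel]

end MulAut

open MulAut

theorem stmt_5_general {M P Q B : Type*} [Group M] [Group P] [Group Q] [Group B]
    (μ : M →* P) (aP : P →* MulAut M)
    (cm1M : ∀ (p : P) (m : M), μ (aP p m) = p * μ m * p⁻¹)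
    (cm2M : ∀ m m' : M, aP (μ m) m' = m * m' * m⁻¹)
    (φ : P →* Q)
    -- an arbitrary crossed `Q`-module `(B, Q, v)` …
    (v : B →* Q) (aB : Q →* MulAut B)
    -- … together with a crossed module morphism `(h, φ) : (M,P,μ) → (B,Q,v)`
    (h : M →* B)
    (hcomm : ∀ m, v (h m) = φ (μ m))
    (hequiv : ∀ (p : P) (m : M), h (aP p m) = aB (φ p) (h m)) :
    (Subgroup.closure {x : M | ∃ k ∈ φ.ker, ∃ m : M, x = aP k m * m⁻¹}).Normal ∧
    (∀ (p : P) (x : M),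
      x ∈ Subgroup.normalClosure {x : M | ∃ k ∈ φ.ker, ∃ m : M, x = aP k m * m⁻¹} →
      aP p x ∈ Subgroup.normalClosure {x : M | ∃ k ∈ φ.ker, ∃ m : M, x = aP k m * m⁻¹}) ∧
    (∀ k ∈ φ.ker, ∀ m : M,
      (QuotientGroup.mk (aP k m) :
        M ⧸ Subgroup.normalClosure {x : M | ∃ k ∈ φ.ker, ∃ m : M, x = aP k m * m⁻¹}) =
      QuotientGroup.mk m) ∧
    ∃ μbar : (M ⧸ Subgroup.normalClosure
        {x : M | ∃ k ∈ φ.ker, ∃ m : M, x = aP k m * m⁻¹}) →* Q,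
      (∀ m : M, μbar (QuotientGroup.mk m) = φ (μ m)) ∧
      -- CM1 for the quotient, at the level of representatives
      (∀ (p : P) (m : M), μbar (QuotientGroup.mk (aP p m)) =
        φ p * μbar (QuotientGroup.mk m) * (φ p)⁻¹) ∧
      -- CM2 (Peiffer identity) for the quotient, at the level of representatives
      (∀ m n : M,
        (QuotientGroup.mk (aP (μ m) n) :
          M ⧸ Subgroup.normalClosure {x : M | ∃ k ∈ φ.ker, ∃ m : M, x = aP k m * m⁻¹}) =
        QuotientGroup.mk m * QuotientGroup.mk n * (QuotientGroup.mk m)⁻¹) ∧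
      -- universal property: `h` factors uniquely through the quotient as a
      -- crossed `Q`-module morphism
      ∃! h' : (M ⧸ Subgroup.normalClosure
          {x : M | ∃ k ∈ φ.ker, ∃ m : M, x = aP k m * m⁻¹}) →* B,
        (∀ m : M, h' (QuotientGroup.mk m) = h m) ∧
        (∀ (p : P) (m : M), h' (QuotientGroup.mk (aP p m)) =
          aB (φ p) (h' (QuotientGroup.mk m))) ∧
        (∀ m : M, v (h' (QuotientGroup.mk m)) = μbar (QuotientGroup.mk m)) := by
  have hNC := normalClosure_actionCommutatorSet_eq_closure (K := φ.ker) cm2M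
  have hμ : normalClosure (actionCommutatorSet aP φ.ker) ≤ (φ.comp μ).ker :=
    normalClosure_actionCommutatorSet_le_ker _ fun k hk m => by
      rw [MonoidHom.mem_ker] at hk
      simp [cm1M, hk]
  have hh : normalClosure (actionCommutatorSet aP φ.ker) ≤ h.ker :=
    normalClosure_actionCommutatorSet_le_ker _ fun k hk m => by
      rw [MonoidHom.mem_ker] at hk
      simp [hequiv, hk]
  refine ⟨closure_actionCommutatorSet_normal cm2M,
    fun p x hx => hNC ▸ apply_mem_closure_actionCommutatorSet p (hNC ▸ hx),
    fun k hk m => mk_apply_eq_mk hk m,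
    QuotientGroup.lift _ (φ.comp μ) hμ, fun m => rfl,
    fun p m => by show φ (μ _) = φ p * φ (μ m) * (φ p)⁻¹; rw [cm1M]; simp,
    fun m n => by rw [cm2M]; rfl,
    ⟨QuotientGroup.lift _ h hh, ⟨fun m => rfl, fun p m => hequiv p m, fun m => hcomm m⟩, ?_⟩⟩
  rintro h' ⟨hh', -, -⟩
  exact QuotientGroup.monoidHom_ext _ (MonoidHom.ext hh')

/-- For a crossed module `μ : M → P` and a surjective `φ : P → Q` with kernel `K`, the
induced crossed module `φ*(M)` is `M/[K,M]`: the subgroup `[K,M]` generated by the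
elements `ᵏm·m⁻¹` is normal and `P`-stable, `K` acts trivially on the quotient (so the
quotient carries a `Q ≅ P/K`-action), the induced map `M/[K,M] → Q` is a crossed module,
and it satisfies the universal property of the induced crossed module. -/
theorem stmt_5 {M P Q B : Type*} [Group M] [Group P] [Group Q] [Group B]
    (μ : M →* P) (aP : P →* MulAut M)
    (cm1M : ∀ (p : P) (m : M), μ (aP p m) = p * μ m * p⁻¹)
    (cm2M : ∀ m m' : M, aP (μ m) m' = m * m' * m⁻¹)
    (φ : P →* Q) (hφ : Function.Surjective φ)
    -- an arbitrary crossed `Q`-module `(B, Q, v)` …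
    (v : B →* Q) (aB : Q →* MulAut B)
    (cm1B : ∀ (q : Q) (b : B), v (aB q b) = q * v b * q⁻¹)
    (cm2B : ∀ b b' : B, aB (v b) b' = b * b' * b⁻¹)
    -- … together with a crossed module morphism `(h, φ) : (M,P,μ) → (B,Q,v)`
    (h : M →* B)
    (hcomm : ∀ m, v (h m) = φ (μ m))
    (hequiv : ∀ (p : P) (m : M), h (aP p m) = aB (φ p) (h m)) :
    (Subgroup.closure {x : M | ∃ k ∈ φ.ker, ∃ m : M, x = aP k m * m⁻¹}).Normal ∧
    (∀ (p : P) (x : M),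
      x ∈ Subgroup.normalClosure {x : M | ∃ k ∈ φ.ker, ∃ m : M, x = aP k m * m⁻¹} →
      aP p x ∈ Subgroup.normalClosure {x : M | ∃ k ∈ φ.ker, ∃ m : M, x = aP k m * m⁻¹}) ∧
    (∀ k ∈ φ.ker, ∀ m : M,
      (QuotientGroup.mk (aP k m) :
        M ⧸ Subgroup.normalClosure {x : M | ∃ k ∈ φ.ker, ∃ m : M, x = aP k m * m⁻¹}) =
      QuotientGroup.mk m) ∧
    ∃ μbar : (M ⧸ Subgroup.normalClosure
        {x : M | ∃ k ∈ φ.ker, ∃ m : M, x = aP k m * m⁻¹}) →* Q,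
      (∀ m : M, μbar (QuotientGroup.mk m) = φ (μ m)) ∧
      -- CM1 for the quotient, at the level of representatives
      (∀ (p : P) (m : M), μbar (QuotientGroup.mk (aP p m)) =
        φ p * μbar (QuotientGroup.mk m) * (φ p)⁻¹) ∧
      -- CM2 (Peiffer identity) for the quotient, at the level of representatives
      (∀ m n : M,
        (QuotientGroup.mk (aP (μ m) n) :
          M ⧸ Subgroup.normalClosure {x : M | ∃ k ∈ φ.ker, ∃ m : M, x = aP k m * m⁻¹}) =
        QuotientGroup.mk m * QuotientGroup.mk n * (QuotientGroup.mk m)⁻¹) ∧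
      -- universal property: `h` factors uniquely through the quotient as a
      -- crossed `Q`-module morphism
      ∃! h' : (M ⧸ Subgroup.normalClosure
          {x : M | ∃ k ∈ φ.ker, ∃ m : M, x = aP k m * m⁻¹}) →* B,
        (∀ m : M, h' (QuotientGroup.mk m) = h m) ∧
        (∀ (p : P) (m : M), h' (QuotientGroup.mk (aP p m)) =
          aB (φ p) (h' (QuotientGroup.mk m))) ∧
        (∀ m : M, v (h' (QuotientGroup.mk m)) = μbar (QuotientGroup.mk m)) :=
  stmt_5_general μ aP cm1M cm2M φ v aB h hcomm hequiv
end

section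
/- In a 2-crossed module L →^{∂₂} M →^{∂₁} P, the map ∂₂ : L → M together with the M-action on L defined by ᵐl = l·{∂₂(l)⁻¹, m} makes (L, M, ∂₂) a crossed module. -/
/-!
CM2 is PL2 and CM1 is PL1 once `∂₁∂₂ = 1`. The work is in showing that `ᵐl = l·{∂₂l⁻¹, m}` is an
action by automorphisms. PL4 rewrites it as `ᵐl = {∂₂l, m}⁻¹·l`, and PL3 together with PL2 and
PL4 gives the twisting rule `^{∂₂c·m}l = c·ᵐl·c⁻¹`. Expanding `{∂₂l·∂₂l', m}` by PL3b then yields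
multiplicativity in `l`, and expanding `{∂₂l, m·m'}` by PL3a yields `^{mm'}l = ᵐ(^{m'}l)`.
-/

section

variable {L M P : Type*} [Group L] [Group M] [Group P]

def peifferAct (d2 : L →* M) (br : M → M → L) (m : M) (l : L) : L :=
  l * br (d2 l)⁻¹ m

/-- Axioms PL1–PL4 of a Peiffer lifting `br = {-,-}` on the complex `L → M → P`. -/
structure IsPeifferLifting (aL : P →* MulAut L) (aM : P →* MulAut M) (d2 : L →* M) (d1 : M →* P)
    (br : M → M → L) : Prop where
  d1_d2 : ∀ l, d1 (d2 l) = 1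
  d2_lift : ∀ m0 m1, d2 (br m0 m1) = m0 * m1 * m0⁻¹ * (aM (d1 m0) m1)⁻¹
  lift_d2_d2 : ∀ l0 l1, br (d2 l0) (d2 l1) = l0 * l1 * l0⁻¹ * l1⁻¹
  lift_mul_right : ∀ m0 m1 m2,
    br m0 (m1 * m2) = peifferAct d2 br (m0 * m1 * m0⁻¹) (br m0 m2) * br m0 m1
  lift_mul_left : ∀ m0 m1 m2, br (m0 * m1) m2 = br m0 (m1 * m2 * m1⁻¹) * aL (d1 m0) (br m1 m2)
  lift_d2_left : ∀ l m, br (d2 l) m = l * (peifferAct d2 br m l)⁻¹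
  lift_d2_right : ∀ m l, br m (d2 l) = peifferAct d2 br m l * (aL (d1 m) l)⁻¹

namespace IsPeifferLifting

variable {aL : P →* MulAut L} {aM : P →* MulAut M} {d2 : L →* M} {d1 : M →* P} {br : M → M → L}

theorem lift_one_left (h : IsPeifferLifting aL aM d2 d1 br) (m : M) : br 1 m = 1 := by
  have h1 := h.lift_mul_left 1 1 m
  simp only [one_mul, mul_one, inv_one, map_one, MulAut.one_apply] at h1
  exact left_eq_mul.mp h1

theorem peifferAct_map_one (h : IsPeifferLifting aL aM d2 d1 br) (m : M) :
    peifferAct d2 br m 1 = 1 := by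
  simp only [peifferAct, map_one, inv_one, one_mul, h.lift_one_left]

theorem lift_one_right (h : IsPeifferLifting aL aM d2 d1 br) (m : M) : br m 1 = 1 := by
  simpa [h.peifferAct_map_one] using h.lift_d2_right m 1

theorem peifferAct_one (h : IsPeifferLifting aL aM d2 d1 br) (l : L) :
    peifferAct d2 br 1 l = l := by
  rw [peifferAct, h.lift_one_right, mul_one]

theorem peifferAct_eq_inv_lift_mul (h : IsPeifferLifting aL aM d2 d1 br) (m : M) (l : L) :
    peifferAct d2 br m l = (br (d2 l) m)⁻¹ * l := by
  rw [h.lift_d2_left]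
  group

theorem peifferAct_d2 (h : IsPeifferLifting aL aM d2 d1 br) (l l' : L) :
    peifferAct d2 br (d2 l) l' = l * l' * l⁻¹ := by
  rw [peifferAct, ← map_inv, h.lift_d2_d2]
  group

theorem d2_peifferAct (h : IsPeifferLifting aL aM d2 d1 br) (m : M) (l : L) :
    d2 (peifferAct d2 br m l) = m * d2 l * m⁻¹ := by
  rw [peifferAct, map_mul, h.d2_lift, map_inv, h.d1_d2, inv_one, map_one, MulAut.one_apply]
  group

theorem d2_mul_mul_inv (h : IsPeifferLifting aL aM d2 d1 br) (l : L) (m : M) :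
    d2 l * m * (d2 l)⁻¹ = d2 (br (d2 l) m) * m := by
  rw [h.d2_lift, h.d1_d2, map_one, MulAut.one_apply]
  group

theorem peifferAct_d2_mul (h : IsPeifferLifting aL aM d2 d1 br) (c : L) (m : M) (l : L) :
    peifferAct d2 br (d2 c * m) l = c * peifferAct d2 br m l * c⁻¹ := by
  have h3 := h.lift_mul_right (d2 l) (d2 c) m
  rw [show d2 l * d2 c * (d2 l)⁻¹ = d2 (l * c * l⁻¹) by simp, h.peifferAct_d2, h.lift_d2_d2,
    h.lift_d2_left l m] at h3
  rw [h.peifferAct_eq_inv_lift_mul, h3]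
  group

theorem peifferAct_map_mul (h : IsPeifferLifting aL aM d2 d1 br) (m : M) (l l' : L) :
    peifferAct d2 br m (l * l') = peifferAct d2 br m l * peifferAct d2 br m l' := by
  rw [h.peifferAct_eq_inv_lift_mul m (l * l'), map_mul, h.lift_mul_left, h.d2_mul_mul_inv,
    h.d1_d2, map_one, MulAut.one_apply, h.lift_d2_left l, h.peifferAct_d2_mul,
    h.peifferAct_eq_inv_lift_mul m l, h.peifferAct_eq_inv_lift_mul m l']
  group

theorem peifferAct_map_inv (h : IsPeifferLifting aL aM d2 d1 br) (m : M) (l : L) :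
    peifferAct d2 br m l⁻¹ = (peifferAct d2 br m l)⁻¹ := by
  refine eq_inv_of_mul_eq_one_right ?_
  rw [← h.peifferAct_map_mul, mul_inv_cancel, h.peifferAct_map_one]

theorem peifferAct_mul (h : IsPeifferLifting aL aM d2 d1 br) (m m' : M) (l : L) :
    peifferAct d2 br (m * m') l = peifferAct d2 br m (peifferAct d2 br m' l) := by
  have h3 := h.lift_mul_right (d2 l) m m'
  rw [h.d2_mul_mul_inv, h.peifferAct_d2_mul] at h3
  rw [h.peifferAct_eq_inv_lift_mul (m * m') l, h3, h.peifferAct_eq_inv_lift_mul m' l,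
    h.peifferAct_map_mul, h.peifferAct_map_inv, h.peifferAct_eq_inv_lift_mul m l]
  group

def toMulAut (h : IsPeifferLifting aL aM d2 d1 br) : M →* MulAut L where
  toFun m :=
    { toFun := peifferAct d2 br m
      invFun := peifferAct d2 br m⁻¹
      left_inv l := by rw [← h.peifferAct_mul, inv_mul_cancel, h.peifferAct_one]
      right_inv l := by rw [← h.peifferAct_mul, mul_inv_cancel, h.peifferAct_one]
      map_mul' := h.peifferAct_map_mul m }
  map_one' := MulEquiv.ext h.peifferAct_one
  map_mul' m m' := MulEquiv.ext (h.peifferAct_mul m m')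

end IsPeifferLifting

end

theorem stmt_8_general {L M P : Type*} [Group L] [Group M] [Group P]
    (aL : P →* MulAut L) (aM : P →* MulAut M)
    (d2 : L →* M) (d1 : M →* P)
    (hcomp : ∀ l : L, d1 (d2 l) = 1)
    (br : M → M → L)
    (aML : M → L → L)
    (hML : ∀ (m : M) (l : L), aML m l = l * br ((d2 l)⁻¹) m)
    (PL1 : ∀ m0 m1 : M, d2 (br m0 m1) = m0 * m1 * m0⁻¹ * (aM (d1 m0) m1)⁻¹)
    (PL2 : ∀ l0 l1 : L, br (d2 l0) (d2 l1) = l0 * l1 * l0⁻¹ * l1⁻¹)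
    (PL3a : ∀ m0 m1 m2 : M, br m0 (m1 * m2) = aML (m0 * m1 * m0⁻¹) (br m0 m2) * br m0 m1)
    (PL3b : ∀ m0 m1 m2 : M,
      br (m0 * m1) m2 = br m0 (m1 * m2 * m1⁻¹) * aL (d1 m0) (br m1 m2))
    (PL4a : ∀ (l : L) (m : M), br (d2 l) m = l * (aML m l)⁻¹)
    (PL4b : ∀ (m : M) (l : L), br m (d2 l) = aML m l * (aL (d1 m) l)⁻¹) :
    (∀ (m : M) (l l' : L), aML m (l * l') = aML m l * aML m l') ∧
    (∀ l : L, aML (1 : M) l = l) ∧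
    (∀ (m m' : M) (l : L), aML (m * m') l = aML m (aML m' l)) ∧
    (∀ m : M, Function.Bijective (aML m)) ∧
    (∀ (m : M) (l : L), d2 (aML m l) = m * d2 l * m⁻¹) ∧
    (∀ l l' : L, aML (d2 l) l' = l * l' * l⁻¹) := by
  obtain rfl : aML = peifferAct d2 br := funext₂ hML
  have h : IsPeifferLifting aL aM d2 d1 br := ⟨hcomp, PL1, PL2, PL3a, PL3b, PL4a, PL4b⟩
  exact ⟨h.peifferAct_map_mul, h.peifferAct_one, h.peifferAct_mul,
    fun m => (h.toMulAut m).bijective, h.d2_peifferAct, h.peifferAct_d2⟩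

/-- In a 2-crossed module `L →^{∂₂} M →^{∂₁} P`, the `M`-action on `L` given by
`ᵐl = l·{∂₂(l)⁻¹, m}` makes `(L, M, ∂₂)` a crossed module: it is an action by group
automorphisms, `∂₂` is `M`-equivariant (CM1), and the Peiffer identity (CM2) holds. -/
theorem stmt_8 {L M P : Type*} [Group L] [Group M] [Group P]
    (aL : P →* MulAut L) (aM : P →* MulAut M)
    (d2 : L →* M) (d1 : M →* P)
    (hn2 : d2.range.Normal) (hn1 : d1.range.Normal)
    (hcomp : ∀ l : L, d1 (d2 l) = 1)
    (heq2 : ∀ (p : P) (l : L), d2 (aL p l) = aM p (d2 l))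
    (heq1 : ∀ (p : P) (m : M), d1 (aM p m) = p * d1 m * p⁻¹)
    (br : M → M → L)
    (aML : M → L → L)
    (hML : ∀ (m : M) (l : L), aML m l = l * br ((d2 l)⁻¹) m)
    (PL1 : ∀ m0 m1 : M, d2 (br m0 m1) = m0 * m1 * m0⁻¹ * (aM (d1 m0) m1)⁻¹)
    (PL2 : ∀ l0 l1 : L, br (d2 l0) (d2 l1) = l0 * l1 * l0⁻¹ * l1⁻¹)
    (PL3a : ∀ m0 m1 m2 : M, br m0 (m1 * m2) = aML (m0 * m1 * m0⁻¹) (br m0 m2) * br m0 m1)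
    (PL3b : ∀ m0 m1 m2 : M,
      br (m0 * m1) m2 = br m0 (m1 * m2 * m1⁻¹) * aL (d1 m0) (br m1 m2))
    (PL4a : ∀ (l : L) (m : M), br (d2 l) m = l * (aML m l)⁻¹)
    (PL4b : ∀ (m : M) (l : L), br m (d2 l) = aML m l * (aL (d1 m) l)⁻¹)
    (PL5 : ∀ (p : P) (m0 m1 : M), aL p (br m0 m1) = br (aM p m0) (aM p m1)) :
    (∀ (m : M) (l l' : L), aML m (l * l') = aML m l * aML m l') ∧
    (∀ l : L, aML (1 : M) l = l) ∧
    (∀ (m m' : M) (l : L), aML (m * m') l = aML m (aML m' l)) ∧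
    (∀ m : M, Function.Bijective (aML m)) ∧
    (∀ (m : M) (l : L), d2 (aML m l) = m * d2 l * m⁻¹) ∧
    (∀ l l' : L, aML (d2 l) l' = l * l' * l⁻¹) :=
  stmt_8_general aL aM d2 d1 hcomp br aML hML PL1 PL2 PL3a PL3b PL4a PL4b
end

section
/- Let ∂₁ : M → P be a pre-crossed module and ⟨M,M⟩ ≤ M the Peiffer subgroup generated by all Peiffer commutators ⟨m, m'⟩ = m·m'·m⁻¹·(^{∂₁(m)}m'⁻¹). Then ⟨M,M⟩ → M → P with the Peiffer lifting {m, m'} = ⟨m, m'⟩ is a 2-crossed module. -/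
/-!
Because `∂₁` is `P`-equivariant, it kills every Peiffer commutator and the `P`-action permutes
them; hence the Peiffer subgroup lies in `ker ∂₁` and is `P`-stable. It is normal since
`g n g⁻¹ = ⟨g, n⟩ · ^{∂₁g}n`. Elements of `ker ∂₁` act trivially, so `⟨c, m⟩` with `∂₁c = 1` is
the ordinary commutator `⁅c, m⁆`; after this evaluation PL2–PL4 are identities between group
words.
-/

/-- The Peiffer commutator `⟨m,m'⟩ = m·m'·m⁻¹·(^{∂₁m}m'⁻¹)` of a pre-crossed module. -/
def peifferComm {M P : Type*} [Group M] [Group P] (aM : P →* MulAut M) (d1 : M →* P)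
    (m m' : M) : M :=
  m * m' * m⁻¹ * (aM (d1 m) m')⁻¹

open scoped commutatorElement

section PeifferCommutator

variable {M P : Type*} [Group M] [Group P] (aM : P →* MulAut M) (d1 : M →* P)

theorem conj_eq_peifferComm_mul (g n : M) :
    g * n * g⁻¹ = peifferComm aM d1 g n * aM (d1 g) n := by
  simp [peifferComm]

theorem peifferComm_eq_commutatorElement {c : M} (hc : d1 c = 1) (m : M) :
    peifferComm aM d1 c m = ⁅c, m⁆ := by
  simp [peifferComm, hc, commutatorElement_def]

theorem peifferComm_mul_left (m₀ m₁ m₂ : M) :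
    peifferComm aM d1 (m₀ * m₁) m₂ =
      peifferComm aM d1 m₀ (m₁ * m₂ * m₁⁻¹) * aM (d1 m₀) (peifferComm aM d1 m₁ m₂) := by
  simp only [peifferComm, map_mul, MulAut.mul_apply, map_inv]
  group

theorem peifferComm_of_map_left_eq_one {l : M} (hl : d1 l = 1) (m : M) :
    peifferComm aM d1 l m = l * (l * peifferComm aM d1 l⁻¹ m)⁻¹ := by
  simp only [peifferComm, hl, map_inv, inv_one, map_one, MulAut.one_apply]
  group

theorem peifferComm_of_map_right_eq_one {l : M} (hl : d1 l = 1) (m : M) :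
    peifferComm aM d1 m l = l * peifferComm aM d1 l⁻¹ m * (aM (d1 m) l)⁻¹ := by
  simp only [peifferComm, hl, map_inv, inv_one, map_one, MulAut.one_apply]
  group

variable {aM d1}

theorem map_peifferComm_eq_one (pre : ∀ (p : P) (m : M), d1 (aM p m) = p * d1 m * p⁻¹)
    (m m' : M) : d1 (peifferComm aM d1 m m') = 1 := by
  simp only [peifferComm, map_mul, map_inv, pre]
  group

theorem map_peifferComm (pre : ∀ (p : P) (m : M), d1 (aM p m) = p * d1 m * p⁻¹)
    (p : P) (m m' : M) :
    aM p (peifferComm aM d1 m m') = peifferComm aM d1 (aM p m) (aM p m') := by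
  have hact : aM (d1 (aM p m)) (aM p m') = aM p (aM (d1 m) m') := by
    simp [pre, MulAut.mul_apply]
  simp only [peifferComm, map_mul, map_inv, hact]

theorem peifferComm_mul_right (pre : ∀ (p : P) (m : M), d1 (aM p m) = p * d1 m * p⁻¹)
    (m₀ m₁ m₂ : M) :
    peifferComm aM d1 m₀ (m₁ * m₂) =
      peifferComm aM d1 m₀ m₂ *
        peifferComm aM d1 (peifferComm aM d1 m₀ m₂)⁻¹ (m₀ * m₁ * m₀⁻¹) *
      peifferComm aM d1 m₀ m₁ := by
  have hker : d1 (peifferComm aM d1 m₀ m₂)⁻¹ = 1 := by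
    rw [map_inv, map_peifferComm_eq_one pre, inv_one]
  rw [peifferComm_eq_commutatorElement aM d1 hker, commutatorElement_def]
  simp only [peifferComm, map_mul]
  group

end PeifferCommutator

section PeifferSubgroup

variable {M P : Type*} [Group M] [Group P] (aM : P →* MulAut M) (d1 : M →* P)

def peifferSubgroup : Subgroup M :=
  Subgroup.closure {x : M | ∃ m m' : M, x = peifferComm aM d1 m m'}

theorem peifferComm_mem_peifferSubgroup (m m' : M) :
    peifferComm aM d1 m m' ∈ peifferSubgroup aM d1 :=
  Subgroup.subset_closure ⟨m, m', rfl⟩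

variable {aM d1}

theorem peifferSubgroup_le_ker (pre : ∀ (p : P) (m : M), d1 (aM p m) = p * d1 m * p⁻¹) :
    peifferSubgroup aM d1 ≤ d1.ker := by
  rw [peifferSubgroup, Subgroup.closure_le]
  rintro _ ⟨m, m', rfl⟩
  exact map_peifferComm_eq_one pre m m'

theorem peifferSubgroup_le_comap (pre : ∀ (p : P) (m : M), d1 (aM p m) = p * d1 m * p⁻¹)
    (p : P) : peifferSubgroup aM d1 ≤ (peifferSubgroup aM d1).comap (aM p).toMonoidHom := by
  rw [peifferSubgroup, Subgroup.closure_le]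
  rintro _ ⟨m, m', rfl⟩
  rw [SetLike.mem_coe, Subgroup.mem_comap, MulEquiv.coe_toMonoidHom, map_peifferComm pre]
  exact peifferComm_mem_peifferSubgroup aM d1 _ _

theorem peifferSubgroup_normal (pre : ∀ (p : P) (m : M), d1 (aM p m) = p * d1 m * p⁻¹) :
    (peifferSubgroup aM d1).Normal where
  conj_mem n hn g := by
    rw [conj_eq_peifferComm_mul aM d1]
    exact mul_mem (peifferComm_mem_peifferSubgroup aM d1 g n)
      (peifferSubgroup_le_comap pre _ hn)

end PeifferSubgroup

/-- For a pre-crossed module `∂₁ : M → P`, the Peiffer subgroup `⟨M,M⟩` generated by the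
Peiffer commutators gives a 2-crossed module `⟨M,M⟩ → M → P` with Peiffer lifting
`{m,m'} = ⟨m,m'⟩`: the subgroup is normal and `P`-stable (so it is a `P`-group and the
inclusion `∂₂` is `P`-equivariant), `∂₁∂₂ = 1`, and the axioms PL1–PL5 hold (PL1 is the
defining formula of the Peiffer commutator; in PL2–PL4 `∂₂` is the inclusion, so the
`l`-variables range over elements of `⟨M,M⟩`, and the `M`-action on `⟨M,M⟩` is
`ᵐl = l·⟨l⁻¹, m⟩`). -/
theorem stmt_9 {M P : Type*} [Group M] [Group P]
    (aM : P →* MulAut M) (d1 : M →* P)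
    (pre : ∀ (p : P) (m : M), d1 (aM p m) = p * d1 m * p⁻¹) :
    (∀ m m' : M, peifferComm aM d1 m m' ∈
      Subgroup.closure {x : M | ∃ m m' : M, x = peifferComm aM d1 m m'}) ∧
    (Subgroup.closure {x : M | ∃ m m' : M, x = peifferComm aM d1 m m'}).Normal ∧
    (∀ (p : P) (x : M), x ∈ Subgroup.closure {x : M | ∃ m m' : M, x = peifferComm aM d1 m m'}
      → aM p x ∈ Subgroup.closure {x : M | ∃ m m' : M, x = peifferComm aM d1 m m'}) ∧
    -- ∂₁ ∘ ∂₂ = 1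
    (∀ x ∈ Subgroup.closure {x : M | ∃ m m' : M, x = peifferComm aM d1 m m'}, d1 x = 1) ∧
    -- PL2
    (∀ x y : M, x ∈ Subgroup.closure {x : M | ∃ m m' : M, x = peifferComm aM d1 m m'} →
      y ∈ Subgroup.closure {x : M | ∃ m m' : M, x = peifferComm aM d1 m m'} →
      peifferComm aM d1 x y = x * y * x⁻¹ * y⁻¹) ∧
    -- PL3
    (∀ m0 m1 m2 : M, peifferComm aM d1 m0 (m1 * m2) =
      (peifferComm aM d1 m0 m2 *
        peifferComm aM d1 (peifferComm aM d1 m0 m2)⁻¹ (m0 * m1 * m0⁻¹)) *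
      peifferComm aM d1 m0 m1) ∧
    (∀ m0 m1 m2 : M, peifferComm aM d1 (m0 * m1) m2 =
      peifferComm aM d1 m0 (m1 * m2 * m1⁻¹) * aM (d1 m0) (peifferComm aM d1 m1 m2)) ∧
    -- PL4
    (∀ l m : M, l ∈ Subgroup.closure {x : M | ∃ m m' : M, x = peifferComm aM d1 m m'} →
      peifferComm aM d1 l m = l * (l * peifferComm aM d1 l⁻¹ m)⁻¹) ∧
    (∀ m l : M, l ∈ Subgroup.closure {x : M | ∃ m m' : M, x = peifferComm aM d1 m m'} →
      peifferComm aM d1 m l = (l * peifferComm aM d1 l⁻¹ m) * (aM (d1 m) l)⁻¹) ∧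
    -- PL5
    (∀ (p : P) (m0 m1 : M),
      aM p (peifferComm aM d1 m0 m1) = peifferComm aM d1 (aM p m0) (aM p m1)) := by
  have hker : ∀ x ∈ peifferSubgroup aM d1, d1 x = 1 := fun x hx =>
    peifferSubgroup_le_ker pre hx
  refine ⟨peifferComm_mem_peifferSubgroup aM d1, peifferSubgroup_normal pre,
    fun p x hx => peifferSubgroup_le_comap pre p hx, hker, ?_, peifferComm_mul_right pre,
    peifferComm_mul_left aM d1, fun l m hl => peifferComm_of_map_left_eq_one aM d1 (hker l hl) m,
    fun m l hl => peifferComm_of_map_right_eq_one aM d1 (hker l hl) m, map_peifferComm pre⟩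
  intro x y hx _
  rw [peifferComm_eq_commutatorElement aM d1 (hker x hx), commutatorElement_def]
end

section
/- Let H →^{∂₂} N →^{∂₁} Q be a 2-crossed module and φ : P → Q a group homomorphism. Define φ*(N) = {(n,p) | ∂₁(n) = φ(p)}, ∂₁*(n,p) = p, and ∂₂* : ∂₂⁻¹(Ker ∂₁) → φ*(N) by ∂₂*(h) = (∂₂(h), 1). With the P-actions ᵖ(n,p') = (^{φ(p)}n, pp'p⁻¹) and ᵖh = ^{φ(p)}h, and the Peiffer lifting {(n,p), (n',p')} := {n, n'}, the complex ∂₂⁻¹(Ker ∂₁) → φ*(N) → P is a 2-crossed module. -/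
/-! Every structure map of the pullback is computed on the `N`-component alone, so each axiom
is the corresponding axiom of `H → N → Q`. The only point is that on `φ*(N)` the element
`φ p` coincides with `∂₁ n`, so the actions `^{∂₁ n}` in PL1, PL3 and PL4 may be replaced by
`^{φ p}`; the `P`-component of PL1 is a group identity. -/

namespace MonoidHom

variable {N P Q : Type*} [Group N] [Group P] [Group Q]

def fiberProduct (f : N →* Q) (g : P →* Q) : Subgroup (N × P) :=
  (f.comp (fst N P)).eqLocus (g.comp (snd N P))

theorem mem_fiberProduct {f : N →* Q} {g : P →* Q} {x : N × P} :
    x ∈ f.fiberProduct g ↔ f x.1 = g x.2 :=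
  Iff.rfl

theorem conj_mem_fiberProduct {aN : Q →* MulAut N} {d1 : N →* Q}
    (heq1 : ∀ (q : Q) (n : N), d1 (aN q n) = q * d1 n * q⁻¹) {φ : P →* Q} (p : P)
    {x : N × P} (hx : x ∈ d1.fiberProduct φ) :
    (aN (φ p) x.1, p * x.2 * p⁻¹) ∈ d1.fiberProduct φ := by
  rw [mem_fiberProduct] at hx ⊢
  rw [heq1, hx, map_mul, map_mul, map_inv]

end MonoidHom

theorem br_map_mul_br_map {H N Q : Type*} [Group H] [Group N] [Group Q]
    {aH : Q →* MulAut H} {d2 : H →* N} {d1 : N →* Q} {br : N → N → H} {aNH : N → H → H}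
    (PL4a : ∀ (h : H) (n : N), br (d2 h) n = h * (aNH n h)⁻¹)
    (PL4b : ∀ (n : N) (h : H), br n (d2 h) = aNH n h * (aH (d1 n) h)⁻¹) (h : H) (n : N) :
    br (d2 h) n * br n (d2 h) = h * (aH (d1 n) h)⁻¹ := by
  rw [PL4a, PL4b, mul_assoc, inv_mul_cancel_left]

theorem stmt_12_general {H N P Q : Type*} [Group H] [Group N] [Group P] [Group Q]
    (aH : Q →* MulAut H) (aN : Q →* MulAut N)
    (d2 : H →* N) (d1 : N →* Q)
    (hcomp : ∀ h : H, d1 (d2 h) = 1)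
    (heq2 : ∀ (q : Q) (h : H), d2 (aH q h) = aN q (d2 h))
    (heq1 : ∀ (q : Q) (n : N), d1 (aN q n) = q * d1 n * q⁻¹)
    (br : N → N → H)
    (aNH : N → H → H)
    (PL1 : ∀ n0 n1 : N, d2 (br n0 n1) = n0 * n1 * n0⁻¹ * (aN (d1 n0) n1)⁻¹)
    (PL2 : ∀ h0 h1 : H, br (d2 h0) (d2 h1) = h0 * h1 * h0⁻¹ * h1⁻¹)
    (PL3a : ∀ n0 n1 n2 : N, br n0 (n1 * n2) = aNH (n0 * n1 * n0⁻¹) (br n0 n2) * br n0 n1)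
    (PL3b : ∀ n0 n1 n2 : N,
      br (n0 * n1) n2 = br n0 (n1 * n2 * n1⁻¹) * aH (d1 n0) (br n1 n2))
    (PL4a : ∀ (h : H) (n : N), br (d2 h) n = h * (aNH n h)⁻¹)
    (PL4b : ∀ (n : N) (h : H), br n (d2 h) = aNH n h * (aH (d1 n) h)⁻¹)
    (PL5 : ∀ (q : Q) (n0 n1 : N), aH q (br n0 n1) = br (aN q n0) (aN q n1))
    (φ : P →* Q) :
    -- φ*(N) is a subgroup of N × P
    (∃ S : Subgroup (N × P), ∀ x : N × P, x ∈ S ↔ d1 x.1 = φ x.2) ∧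
    -- ∂₂* lands in φ*(N) and ∂₁* ∘ ∂₂* = 1
    (∀ h : H, d1 (d2 h) = φ (1 : P)) ∧
    -- the P-action preserves φ*(N)
    (∀ (p : P) (x : N × P), d1 x.1 = φ x.2 → d1 (aN (φ p) x.1) = φ (p * x.2 * p⁻¹)) ∧
    -- ∂₂* is P-equivariant
    (∀ (p : P) (h : H),
      ((d2 (aH (φ p) h), (1 : P)) : N × P) = ((aN (φ p) (d2 h)), p * 1 * p⁻¹)) ∧
    -- PL1
    (∀ x y : N × P, d1 x.1 = φ x.2 → d1 y.1 = φ y.2 →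
      d2 (br x.1 y.1) = x.1 * y.1 * x.1⁻¹ * (aN (φ x.2) y.1)⁻¹ ∧
      (1 : P) = x.2 * y.2 * x.2⁻¹ * (x.2 * y.2⁻¹ * x.2⁻¹)) ∧
    -- PL2
    (∀ h h' : H, d2 h ∈ d1.ker → d2 h' ∈ d1.ker →
      br (d2 h) (d2 h') = h * h' * h⁻¹ * h'⁻¹) ∧
    -- PL3
    (∀ x y z : N × P, d1 x.1 = φ x.2 → d1 y.1 = φ y.2 → d1 z.1 = φ z.2 →
      br x.1 (y.1 * z.1) = aNH (x.1 * y.1 * x.1⁻¹) (br x.1 z.1) * br x.1 y.1) ∧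
    (∀ x y z : N × P, d1 x.1 = φ x.2 → d1 y.1 = φ y.2 → d1 z.1 = φ z.2 →
      br (x.1 * y.1) z.1 = br x.1 (y.1 * z.1 * y.1⁻¹) * aH (φ x.2) (br y.1 z.1)) ∧
    -- PL4
    (∀ (h : H) (x : N × P), d2 h ∈ d1.ker → d1 x.1 = φ x.2 →
      br (d2 h) x.1 * br x.1 (d2 h) = h * (aH (φ x.2) h)⁻¹) ∧
    -- PL5
    (∀ (p : P) (x y : N × P), d1 x.1 = φ x.2 → d1 y.1 = φ y.2 →
      aH (φ p) (br x.1 y.1) = br (aN (φ p) x.1) (aN (φ p) y.1)) := by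
  refine ⟨⟨d1.fiberProduct φ, fun _ => MonoidHom.mem_fiberProduct⟩, fun h => ?_,
    fun p _ hx => MonoidHom.conj_mem_fiberProduct heq1 p hx, fun p h => ?_,
    fun x y hx _ => ⟨by rw [PL1, hx], by group⟩, fun h h' _ _ => PL2 h h',
    fun x y z _ _ _ => PL3a x.1 y.1 z.1, fun x y z hx _ _ => by rw [PL3b, hx],
    fun h x _ hx => hx ▸ br_map_mul_br_map PL4a PL4b h x.1,
    fun p x y _ _ => PL5 (φ p) x.1 y.1⟩
  · rw [hcomp, map_one]
  · rw [heq2, mul_one, mul_inv_cancel]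

/-- Pullback 2-crossed module: for a 2-crossed module `H →^{∂₂} N →^{∂₁} Q` and a
homomorphism `φ : P → Q`, the complex `∂₂⁻¹(Ker ∂₁) →^{∂₂*} φ*(N) →^{∂₁*} P`, with
`φ*(N) = {(n,p) | ∂₁(n) = φ(p)}`, `∂₂*(h) = (∂₂(h),1)`, `∂₁*(n,p) = p`, `P`-actions
`ᵖ(n,p') = (^{φp}n, pp'p⁻¹)` and `ᵖh = ^{φp}h`, and Peiffer lifting
`{(n,p),(n',p')} = {n,n'}`, is a 2-crossed module (fiber product a subgroup, actions
preserve everything, boundaries equivariant, PL1–PL5). -/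
theorem stmt_12 {H N P Q : Type*} [Group H] [Group N] [Group P] [Group Q]
    (aH : Q →* MulAut H) (aN : Q →* MulAut N)
    (d2 : H →* N) (d1 : N →* Q)
    (hn2 : d2.range.Normal) (hn1 : d1.range.Normal)
    (hcomp : ∀ h : H, d1 (d2 h) = 1)
    (heq2 : ∀ (q : Q) (h : H), d2 (aH q h) = aN q (d2 h))
    (heq1 : ∀ (q : Q) (n : N), d1 (aN q n) = q * d1 n * q⁻¹)
    (br : N → N → H)
    (aNH : N → H → H)
    (hNH : ∀ (n : N) (h : H), aNH n h = h * br ((d2 h)⁻¹) n)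
    (PL1 : ∀ n0 n1 : N, d2 (br n0 n1) = n0 * n1 * n0⁻¹ * (aN (d1 n0) n1)⁻¹)
    (PL2 : ∀ h0 h1 : H, br (d2 h0) (d2 h1) = h0 * h1 * h0⁻¹ * h1⁻¹)
    (PL3a : ∀ n0 n1 n2 : N, br n0 (n1 * n2) = aNH (n0 * n1 * n0⁻¹) (br n0 n2) * br n0 n1)
    (PL3b : ∀ n0 n1 n2 : N,
      br (n0 * n1) n2 = br n0 (n1 * n2 * n1⁻¹) * aH (d1 n0) (br n1 n2))
    (PL4a : ∀ (h : H) (n : N), br (d2 h) n = h * (aNH n h)⁻¹)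
    (PL4b : ∀ (n : N) (h : H), br n (d2 h) = aNH n h * (aH (d1 n) h)⁻¹)
    (PL5 : ∀ (q : Q) (n0 n1 : N), aH q (br n0 n1) = br (aN q n0) (aN q n1))
    (φ : P →* Q) :
    -- φ*(N) is a subgroup of N × P
    (∃ S : Subgroup (N × P), ∀ x : N × P, x ∈ S ↔ d1 x.1 = φ x.2) ∧
    -- ∂₂* lands in φ*(N) and ∂₁* ∘ ∂₂* = 1
    (∀ h : H, d1 (d2 h) = φ (1 : P)) ∧
    -- the P-action preserves φ*(N)
    (∀ (p : P) (x : N × P), d1 x.1 = φ x.2 → d1 (aN (φ p) x.1) = φ (p * x.2 * p⁻¹)) ∧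
    -- ∂₂* is P-equivariant
    (∀ (p : P) (h : H),
      ((d2 (aH (φ p) h), (1 : P)) : N × P) = ((aN (φ p) (d2 h)), p * 1 * p⁻¹)) ∧
    -- PL1
    (∀ x y : N × P, d1 x.1 = φ x.2 → d1 y.1 = φ y.2 →
      d2 (br x.1 y.1) = x.1 * y.1 * x.1⁻¹ * (aN (φ x.2) y.1)⁻¹ ∧
      (1 : P) = x.2 * y.2 * x.2⁻¹ * (x.2 * y.2⁻¹ * x.2⁻¹)) ∧
    -- PL2
    (∀ h h' : H, d2 h ∈ d1.ker → d2 h' ∈ d1.ker →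
      br (d2 h) (d2 h') = h * h' * h⁻¹ * h'⁻¹) ∧
    -- PL3
    (∀ x y z : N × P, d1 x.1 = φ x.2 → d1 y.1 = φ y.2 → d1 z.1 = φ z.2 →
      br x.1 (y.1 * z.1) = aNH (x.1 * y.1 * x.1⁻¹) (br x.1 z.1) * br x.1 y.1) ∧
    (∀ x y z : N × P, d1 x.1 = φ x.2 → d1 y.1 = φ y.2 → d1 z.1 = φ z.2 →
      br (x.1 * y.1) z.1 = br x.1 (y.1 * z.1 * y.1⁻¹) * aH (φ x.2) (br y.1 z.1)) ∧
    -- PL4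
    (∀ (h : H) (x : N × P), d2 h ∈ d1.ker → d1 x.1 = φ x.2 →
      br (d2 h) x.1 * br x.1 (d2 h) = h * (aH (φ x.2) h)⁻¹) ∧
    -- PL5
    (∀ (p : P) (x y : N × P), d1 x.1 = φ x.2 → d1 y.1 = φ y.2 →
      aH (φ p) (br x.1 y.1) = br (aN (φ p) x.1) (aN (φ p) y.1)) :=
  stmt_12_general aH aN d2 d1 hcomp heq2 heq1 br aNH PL1 PL2 PL3a PL3b PL4a PL4b PL5 φ
end
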